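/- If T is a pregeometric theory (algebraic closure satisfies the exchange property), then M-independence coincides with m-independence: for all small sets A, B, C, A ⫝M_C B if and only if A ⫝a_D B for every D with C ⊆ D ⊆ BC. -/

import Mathlib

/-!
m-independence says that adjoining `A` makes no element of `B` algebraic over `C ∪ X`, `X ⊆ B`.
With exchange this turns around: removing the elements of `X` one at a time, an element of `A`
algebraic over `A' ∪ C ∪ X` (`A' ⊆ A`) is already algebraic over `A' ∪ C`. Removing then the
elements of `A` one at a time, by exchange again, an element of `acl(BC)` algebraic over `A ∪ D`
with `C ⊆ D ⊆ acl(BC)` is algebraic over `D`, which is M-independence.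
-/

open FirstOrder FirstOrder.Language Set Cardinal

universe u v w x

namespace PaperDiv

variable (L : FirstOrder.Language.{u, v}) (M : Type w) [L.Structure M]

/-- Two (possibly infinite) tuples have the same complete type over the parameter set `C`. -/
def SameType (C : Set M) {ι : Type x} (a b : ι → M) : Prop :=
  ∀ (n : ℕ) (φ : L.Formula (ι ⊕ Fin n)) (c : Fin n → M),
    (∀ i, c i ∈ C) → (φ.Realize (Sum.elim a c) ↔ φ.Realize (Sum.elim b c))

/-- The model-theoretic algebraic closure of a set `C`. -/
def acl (C : Set M) : Set M :=
  {a | ∃ (n : ℕ) (φ : L.Formula (Fin (n + 1))) (c : Fin n → M),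
    (∀ i, c i ∈ C) ∧ φ.Realize (Fin.cons a c) ∧ {x : M | φ.Realize (Fin.cons x c)}.Finite}

/-- A sequence of `ι`-tuples is indiscernible over `C`. -/
def Indiscernible (C : Set M) {ι : Type x} (b : ℕ → ι → M) : Prop :=
  ∀ (n : ℕ) (s t : Fin n → ℕ), StrictMono s → StrictMono t →
    SameType L M C (fun p : Fin n × ι => b (s p.1) p.2) (fun p : Fin n × ι => b (t p.1) p.2)

/-- The formula `φ(x, b)` divides over `C`:  there is a `C`-indiscernible sequence starting
with `b` along which the instances of `φ` are `k`-inconsistent. -/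
def FormulaDividesOver (C : Set M) {ι : Type x} {m : ℕ}
    (φ : L.Formula (ι ⊕ Fin m)) (b : Fin m → M) : Prop :=
  ∃ (bs : ℕ → Fin m → M) (k : ℕ), 0 < k ∧ bs 0 = b ∧ Indiscernible L M C bs ∧
    ∀ s : Finset ℕ, s.card = k → ¬∃ x : ι → M, ∀ i ∈ s, φ.Realize (Sum.elim x (bs i))

/-- The complete type of the tuple `a` over the parameter set `B` divides over `C`. -/
def TypeDividesOver (C B : Set M) {ι : Type x} (a : ι → M) : Prop :=
  ∃ (m : ℕ) (φ : L.Formula (ι ⊕ Fin m)) (b : Fin m → M),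
    (∀ i, b i ∈ B) ∧ φ.Realize (Sum.elim a b) ∧ FormulaDividesOver L M C φ b

/-- The complete type of the tuple `a` over the parameter set `B` forks over `C`: it implies a
finite disjunction of formulas (with arbitrary parameters), each of which divides over `C`. -/
def TypeForksOver (C B : Set M) {ι : Type x} (a : ι → M) : Prop :=
  ∃ (N : ℕ) (m : Fin N → ℕ) (φ : ∀ j, L.Formula (ι ⊕ Fin (m j))) (b : ∀ j, Fin (m j) → M),
    (∀ j, FormulaDividesOver L M C (φ j) (b j)) ∧
    ∀ x : ι → M, SameType L M B x a → ∃ j, (φ j).Realize (Sum.elim x (b j))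

/-- Dividing independence: `A ⫝d_C B`, i.e. `tp(A/BC)` does not divide over `C`. -/
def dind (A C B : Set M) : Prop :=
  ¬TypeDividesOver L M C (B ∪ C) (fun x : A => (x : M))

/-- Forking independence: `A ⫝f_C B`, i.e. `tp(A/BC)` does not fork over `C`. -/
def find (A C B : Set M) : Prop :=
  ¬TypeForksOver L M C (B ∪ C) (fun x : A => (x : M))

/-- Algebraic independence: `A ⫝a_C B`. -/
def aind (A C B : Set M) : Prop :=
  acl L M (A ∪ C) ∩ acl L M (B ∪ C) = acl L M C

/-- M-independence: `A ⫝M_C B`. -/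
def Mind (A C B : Set M) : Prop :=
  ∀ D : Set M, C ⊆ D → D ⊆ acl L M (B ∪ C) → aind L M A D B

/-- m-independence: `A ⫝m_C B`. -/
def mind (A C B : Set M) : Prop :=
  ∀ D : Set M, C ⊆ D → D ⊆ B ∪ C → aind L M A D B

/-- `M` is a monster model (with respect to the cardinal `κ` bounding the "small" sets):
it is strongly `κ`-homogeneous and `κ`-saturated. -/
structure IsMonster (κ : Cardinal.{w}) : Prop where
  aleph0_lt : ℵ₀ < κ
  homogeneous : ∀ (C : Set M) {ι : Type w} (a b : ι → M), #C < κ → #ι < κ →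
    SameType L M C a b → ∃ σ : M ≃[L] M, (∀ c ∈ C, σ c = c) ∧ ∀ i, σ (a i) = b i
  saturated : ∀ (C : Set M) {ι : Type w}, #C < κ → #ι < κ →
    ∀ p : Set ((n : ℕ) × L.Formula (ι ⊕ Fin n) × (Fin n → M)),
      (∀ q ∈ p, ∀ i, q.2.2 i ∈ C) →
      (∀ s : Finset ((n : ℕ) × L.Formula (ι ⊕ Fin n) × (Fin n → M)), ↑s ⊆ p →
        ∃ x : ι → M, ∀ q ∈ s, q.2.1.Realize (Sum.elim x q.2.2)) →
      ∃ x : ι → M, ∀ q ∈ p, q.2.1.Realize (Sum.elim x q.2.2)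


/-- The theory is pregeometric: algebraic closure satisfies the exchange property. -/
def Pregeometric : Prop :=
  ∀ (C : Set M) (a b : M), a ∈ acl L M (C ∪ {b}) → a ∉ acl L M C → b ∈ acl L M (C ∪ {a})

theorem encard_le_coe_iff_forall_not_injective {α : Type*} {S : Set α} {k : ℕ} :
    S.encard ≤ k ↔ ∀ z : Fin (k + 1) → α, (∀ j, z j ∈ S) → ¬Function.Injective z := by
  constructor
  · intro hS z hz hinj
    have : ((k + 1 : ℕ) : ℕ∞) ≤ k := by
      calc ((k + 1 : ℕ) : ℕ∞) = ENat.card (Fin (k + 1)) := by simp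
        _ ≤ (Set.range z).encard := hinj.encard_range
        _ ≤ S.encard := Set.encard_le_encard (Set.range_subset_iff.2 hz)
        _ ≤ k := hS
    exact absurd (by exact_mod_cast this) (Nat.not_succ_le_self k)
  · intro h
    by_contra! hlt
    obtain ⟨x, -⟩ := Set.encard_pos.1 (zero_le.trans_lt hlt)
    have : Nonempty α := ⟨x⟩
    obtain ⟨z, hz, hinj⟩ := (Set.finite_univ (α := Fin (k + 1))).exists_injOn_of_encard_le
      (t := S) (by simpa [Set.encard_univ] using Order.add_one_le_of_lt hlt)
    exact h z (fun j => hz (Set.mem_univ j)) (Set.injOn_univ.1 hinj)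

section Counting

variable {L}

noncomputable def cardLE {α : Type*} (k : ℕ) (φ : L.Formula (Option α)) : L.Formula α :=
  Formula.iAlls (Fin (k + 1))
    ((Formula.iInf fun j => φ.relabel (Option.elim' (Sum.inr j) Sum.inl)) ⊓
      Formula.iInf fun p : {p : Fin (k + 1) × Fin (k + 1) // p.1 ≠ p.2} =>
        (Term.equal (var (Sum.inr p.1.1)) (var (Sum.inr p.1.2))).not).not

theorem realize_cardLE {α : Type*} (k : ℕ) (φ : L.Formula (Option α)) (v : α → M) :
    (cardLE k φ).Realize v ↔ {x | φ.Realize (Option.elim' x v)}.encard ≤ k := by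
  rw [encard_le_coe_iff_forall_not_injective]
  simp only [cardLE, Formula.realize_iAlls, Formula.realize_not, Formula.realize_inf,
    Formula.realize_iInf, Formula.realize_relabel, Formula.realize_equal, Term.realize_var]
  refine forall_congr' fun z => ?_
  have hcomp : ∀ j, (fun a => Sum.elim v z a) ∘ Option.elim' (Sum.inr j) Sum.inl =
      Option.elim' (z j) v := fun j => funext fun o => by cases o <;> rfl
  have hinj : (∀ p : {p : Fin (k + 1) × Fin (k + 1) // p.1 ≠ p.2}, z p.1.1 ≠ z p.1.2) ↔
      Function.Injective z := by
    simp [Function.injective_iff_pairwise_ne, Pairwise]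
  simp only [hcomp, Sum.elim_inr, Set.mem_ofPred_eq, ← hinj, not_and]

end Counting

section Closure

variable {L M}

theorem acl_mono {X Y : Set M} (h : X ⊆ Y) : acl L M X ⊆ acl L M Y := by
  rintro a ⟨n, φ, c, hc, ha, hfin⟩
  exact ⟨n, φ, c, fun i => h (hc i), ha, hfin⟩

theorem subset_acl (X : Set M) : X ⊆ acl L M X := by
  intro a ha
  refine ⟨1, Term.equal (Term.var 0) (Term.var 1), fun _ => a, fun _ => ha, ?_, ?_⟩
  · simp [Formula.realize_equal]
  · refine (Set.finite_singleton a).subset fun x hx => ?_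
    simpa [Formula.realize_equal] using hx

theorem exists_finset_subset_of_mem_acl_union {Y F : Set M} {a : M}
    (ha : a ∈ acl L M (Y ∪ F)) : ∃ s : Finset M, ↑s ⊆ F ∧ a ∈ acl L M (Y ∪ ↑s) := by
  classical
  obtain ⟨n, φ, c, hc, hφ, hfin⟩ := ha
  refine ⟨(Finset.univ.image c).filter (· ∈ F), fun x hx => ?_, n, φ, c, fun i => ?_, hφ, hfin⟩
  · simp only [Finset.coe_filter, Finset.mem_image] at hx
    exact hx.2
  · rcases hc i with h | h
    · exact Or.inl h
    · exact Or.inr (by simp [h])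

theorem mem_acl_of_realize {β : Type*} [Finite β] {X : Set M} {a : M}
    (φ : L.Formula (Option β)) (c : β → M) (hc : ∀ i, c i ∈ X)
    (ha : φ.Realize (Option.elim' a c)) (hfin : {x | φ.Realize (Option.elim' x c)}.Finite) :
    a ∈ acl L M X := by
  obtain ⟨n, ⟨e⟩⟩ := Finite.exists_equiv_fin β
  have hrelabel : ∀ x, (φ.relabel (Option.elim' 0 (Fin.succ ∘ e))).Realize
      (Fin.cons x (c ∘ e.symm)) ↔ φ.Realize (Option.elim' x c) := by
    intro x
    rw [Formula.realize_relabel]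
    congr! 1
    funext o
    cases o <;> simp
  exact ⟨n, _, c ∘ e.symm, fun i => hc _, (hrelabel a).2 ha, by simpa only [hrelabel] using hfin⟩

theorem acl_union_singleton_subset {X : Set M} {b : M} (hb : b ∈ acl L M X) :
    acl L M (X ∪ {b}) ⊆ acl L M X := by
  classical
  rintro a ⟨n, φ, c, hc, ha, hfin⟩
  obtain ⟨m, ψ, d, hd, hbψ, hψfin⟩ := hb
  let k := {x | φ.Realize (Fin.cons x c)}.ncard
  let J := {i : Fin n // c i ∈ X}
  let e : J ⊕ Fin m → M := Sum.elim (fun i => c i) d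
  let cc : M → Fin n → M := fun y i => if c i ∈ X then c i else y
  let param : Fin n → Option (J ⊕ Fin m) ⊕ Unit := fun i =>
    if h : c i ∈ X then Sum.inl (some (Sum.inl ⟨i, h⟩)) else Sum.inr ()
  -- `Φ(x) := ∃ y, ψ(y, d) ∧ φ(x, c[b := y]) ∧ |φ(M, c[b := y])| ≤ k`; the bound keeps every
  -- fibre finite, so the solutions of `Φ` lie in finitely many finite sets.
  let Φ : L.Formula (Option (J ⊕ Fin m)) := Formula.iExs Unit
    (ψ.relabel (Fin.cons (Sum.inr ()) fun j => Sum.inl (some (Sum.inr j))) ⊓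
      φ.relabel (Fin.cons (Sum.inl none) param) ⊓
      cardLE k (φ.relabel (Fin.cons none (some ∘ param))))
  have hparam : ∀ x (y : Unit → M), Sum.elim (Option.elim' x e) y ∘ param = cc (y ()) := by
    intro x y
    funext i
    by_cases h : c i ∈ X <;> simp [param, cc, e, h]
  have hΦ : ∀ x, Φ.Realize (Option.elim' x e) ↔ ∃ y, ψ.Realize (Fin.cons y d) ∧
      φ.Realize (Fin.cons x (cc y)) ∧ {z | φ.Realize (Fin.cons z (cc y))}.encard ≤ k := by
    intro x
    have hψ : ∀ y : Unit → M, Sum.elim (Option.elim' x e) y ∘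
        Fin.cons (Sum.inr ()) (fun j => Sum.inl (some (Sum.inr j))) = Fin.cons (y ()) d := by
      intro y; rw [Fin.comp_cons]; rfl
    have hφ : ∀ y : Unit → M, Sum.elim (Option.elim' x e) y ∘ Fin.cons (Sum.inl none) param =
        Fin.cons x (cc (y ())) := by
      intro y; rw [Fin.comp_cons, hparam]; rfl
    have hφ' : ∀ (y : Unit → M) z, Option.elim' z (Sum.elim (Option.elim' x e) y) ∘
        Fin.cons none (some ∘ param) = Fin.cons z (cc (y ())) := by
      intro y z; rw [Fin.comp_cons, ← hparam x y]; rfl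
    simp only [Φ, Formula.realize_iExs, Formula.realize_inf, Formula.realize_relabel,
      realize_cardLE, hψ, hφ, hφ']
    constructor
    · rintro ⟨y, ⟨hψy, hφy⟩, hk⟩
      exact ⟨y (), hψy, hφy, hk⟩
    · rintro ⟨y, hψy, hφy, hk⟩
      exact ⟨fun _ => y, ⟨hψy, hφy⟩, hk⟩
  have hcc : cc b = c := by
    funext i
    by_cases h : c i ∈ X
    · simp [cc, h]
    · simpa [cc, h] using ((hc i).resolve_left h).symm
  refine mem_acl_of_realize Φ e (Sum.rec (fun i => i.2) hd) ((hΦ a).2 ⟨b, hbψ, hcc ▸ ha, ?_⟩) ?_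
  · rw [hcc, ← hfin.cast_ncard_eq]
  · let Y := {y | ψ.Realize (Fin.cons y d) ∧ {z | φ.Realize (Fin.cons z (cc y))}.encard ≤ k}
    have hsub : {x | Φ.Realize (Option.elim' x e)} ⊆
        ⋃ y ∈ Y, {z | φ.Realize (Fin.cons z (cc y))} := fun x hx => by
      obtain ⟨y, hy, hx, hk⟩ := (hΦ x).1 hx
      exact Set.mem_biUnion (x := y) ⟨hy, hk⟩ hx
    exact ((hψfin.subset fun y hy => hy.1).biUnion
      fun y hy => Set.finite_of_encard_le_coe hy.2).subset hsub

theorem acl_union_finset_subset {X : Set M} (s : Finset M) (hs : ↑s ⊆ acl L M X) :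
    acl L M (X ∪ ↑s) ⊆ acl L M X := by
  classical
  induction s using Finset.induction_on with
  | empty => simp
  | insert b s _ ih =>
    rw [Finset.coe_insert, Set.insert_subset_iff] at *
    rw [Set.union_insert, ← Set.union_singleton]
    exact (acl_union_singleton_subset (acl_mono subset_union_left hs.1)).trans (ih hs.2)

theorem acl_subset_of_subset_acl {X Y : Set M} (h : Y ⊆ acl L M X) :
    acl L M Y ⊆ acl L M X := by
  intro a ha
  obtain ⟨s, hsY, has⟩ := exists_finset_subset_of_mem_acl_union (acl_mono
    (subset_union_right (s := X)) ha)
  exact acl_union_finset_subset s (hsY.trans h) has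

theorem Pregeometric.mem_acl_of_mem_acl_union (hpre : Pregeometric L M) {Y F : Set M} {z : M}
    (hF : ∀ G ⊆ F, ∀ x ∈ F, x ∈ acl L M (Y ∪ G ∪ {z}) → x ∈ acl L M (Y ∪ G))
    (hz : z ∈ acl L M (Y ∪ F)) : z ∈ acl L M Y := by
  classical
  obtain ⟨s, hsF, hzs⟩ := exists_finset_subset_of_mem_acl_union hz
  induction s using Finset.induction_on with
  | empty => simpa using hzs
  | insert x s _ ih =>
    rw [Finset.coe_insert, Set.insert_subset_iff] at hsF
    rw [Finset.coe_insert, Set.union_insert, ← Set.union_singleton] at hzs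
    refine ih hsF.2 (by_contra fun hzs' => hzs' ?_)
    have hx : x ∈ acl L M (Y ∪ ↑s ∪ {z}) := hpre _ z x hzs hzs'
    exact acl_union_singleton_subset (hF _ hsF.2 x hsF.1 hx) hzs

theorem mem_acl_of_mind (hpre : Pregeometric L M) {A C B : Set M} (h : mind L M A C B)
    {A' X : Set M} (hA' : A' ⊆ A) (hX : X ⊆ B) {a : M} (ha : a ∈ A)
    (haX : a ∈ acl L M (A' ∪ C ∪ X)) : a ∈ acl L M (A' ∪ C) := by
  refine hpre.mem_acl_of_mem_acl_union (fun G hG x hx hxa => ?_) haX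
  have hind : aind L M A (C ∪ G) B :=
    h _ subset_union_left (union_subset subset_union_right (hG.trans hX |>.trans subset_union_left))
  have hxCG : x ∈ acl L M (C ∪ G) := by
    rw [← hind]
    refine ⟨acl_mono ?_ hxa, subset_acl _ (Or.inl (hX hx))⟩
    rintro y (((hy | hy) | hy) | rfl)
    exacts [Or.inl (hA' hy), Or.inr (Or.inl hy), Or.inr (Or.inr hy), Or.inl ha]
  exact acl_mono (union_subset_union_left G subset_union_right) hxCG

theorem mem_acl_of_mind_of_mem_acl (hpre : Pregeometric L M) {A C B : Set M}
    (h : mind L M A C B) {D : Set M} (hCD : C ⊆ D) (hD : D ⊆ acl L M (B ∪ C)) {y : M}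
    (hy : y ∈ acl L M (B ∪ C)) (hyA : y ∈ acl L M (D ∪ A)) : y ∈ acl L M D := by
  refine hpre.mem_acl_of_mem_acl_union (fun G hG a ha hay => ?_) hyA
  have hBC : acl L M (B ∪ C) ⊆ acl L M (G ∪ C ∪ B) :=
    acl_mono (union_subset subset_union_right (subset_union_right.trans subset_union_left))
  have haB : a ∈ acl L M (G ∪ C ∪ B) := by
    refine acl_subset_of_subset_acl (union_subset (union_subset (hD.trans hBC) ?_) ?_) hay
    · exact (subset_union_left.trans subset_union_left).trans (subset_acl _)
    · exact singleton_subset_iff.2 (hBC hy)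
  exact acl_mono (union_subset_union_right G hCD |>.trans (union_comm _ _).subset)
    (mem_acl_of_mind hpre h hG (subset_refl B) ha haB)

theorem mind_of_Mind {A C B : Set M} (h : Mind L M A C B) : mind L M A C B :=
  fun D hCD hD => h D hCD (hD.trans (subset_acl _))

theorem Mind_of_mind (hpre : Pregeometric L M) {A C B : Set M} (h : mind L M A C B) :
    Mind L M A C B := by
  intro D hCD hD
  refine Subset.antisymm (fun y ⟨hyA, hyB⟩ => ?_)
    (subset_inter (acl_mono subset_union_right) (acl_mono subset_union_right))
  have hBD : B ∪ D ⊆ acl L M (B ∪ C) := union_subset (subset_union_left.trans (subset_acl _)) hD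
  exact mem_acl_of_mind_of_mem_acl hpre h hCD hD (acl_subset_of_subset_acl hBD hyB)
    (by rwa [union_comm])

end Closure

theorem Mind_iff_mind_of_pregeometric (hpre : Pregeometric L M) :
    ∀ A C B : Set M, Mind L M A C B ↔
      ∀ D : Set M, C ⊆ D → D ⊆ B ∪ C → aind L M A D B :=
  fun _ _ _ => ⟨mind_of_Mind, Mind_of_mind hpre⟩

end PaperDiv
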